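/- arXiv:2509.09050 — 7 statements merged into one kernel-verified Lean document; each statement's English description precedes it below -/
import Mathlib

section
/- Let ε > 0, ρ > 0, δ > 0, c ≥ 0. Let Q : ℝ → (0, ∞) satisfy e^{−c} ≤ Q(s + u)/Q(s) ≤ e^{c} for all s ∈ ℝ and all 0 ≤ u ≤ ρ. Let (t_n)_{n ∈ ℤ} be a sequence of real numbers with δ ≤ t_{n+1} − t_n ≤ ρ for all n ∈ ℤ. Define p^s(n) := ε · inf { e^{ε(t_m − t_n)} · Q(t_m) : m ∈ ℤ, m ≥ n } (infimum in ℝ; the set is bounded below by 0) and q^s(τ) := ε · inf { e^{εt} · Q(τ + t) : t ≥ 0 }. Then for every n ∈ ℤ and every τ ∈ [t_n, t_{n+1}]: e^{−(ερ + c)} · q^s(τ) ≤ p^s(n) ≤ e^{ερ + c} · q^s(τ). -/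
/-- Robustness of the ℤ-indexed hyperbolicity parameter `p^s` with respect to its
continuous-time analogue `q^s`: if `Q` varies slowly (by a factor `e^{±c}` over time
intervals of length at most `ρ`) and the sampling times `t_n` have gaps in `[δ, ρ]`,
then `p^s(n)` and `q^s(τ)` agree up to the factor `e^{ερ + c}` for `τ ∈ [t_n, t_{n+1}]`. -/
theorem robustness_of_ps (ε ρ δ c : ℝ) (hε : 0 < ε) (hρ : 0 < ρ) (hδ : 0 < δ) (hc : 0 ≤ c)
    (Q : ℝ → ℝ) (hQpos : ∀ s, 0 < Q s)
    (hQslow : ∀ s u : ℝ, 0 ≤ u → u ≤ ρ →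
      Real.exp (-c) ≤ Q (s + u) / Q s ∧ Q (s + u) / Q s ≤ Real.exp c)
    (t : ℤ → ℝ) (ht : ∀ n : ℤ, δ ≤ t (n + 1) - t n ∧ t (n + 1) - t n ≤ ρ)
    (ps : ℤ → ℝ)
    (hps : ∀ n : ℤ, ps n =
      ε * sInf {y : ℝ | ∃ m : ℤ, n ≤ m ∧ y = Real.exp (ε * (t m - t n)) * Q (t m)})
    (qs : ℝ → ℝ)
    (hqs : ∀ τ : ℝ, qs τ =
      ε * sInf {y : ℝ | ∃ s : ℝ, 0 ≤ s ∧ y = Real.exp (ε * s) * Q (τ + s)}) :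
    ∀ n : ℤ, ∀ τ : ℝ, t n ≤ τ → τ ≤ t (n + 1) →
      Real.exp (-(ε * ρ + c)) * qs τ ≤ ps n ∧ ps n ≤ Real.exp (ε * ρ + c) * qs τ := by
  classical
  intro n τ hτ1 hτ2
  set h : ℝ := ε * ρ + c with hh
  have hh0 : 0 ≤ h := by positivity
  have flipexp : ∀ x y : ℝ, x ≤ Real.exp h * y → Real.exp (-h) * x ≤ y := by
    intro x y hxy
    have e1 : Real.exp (-h) * (Real.exp h * y) = y := by
      rw [← mul_assoc, ← Real.exp_add]; simp
    have := mul_le_mul_of_nonneg_left hxy (Real.exp_pos (-h)).le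
    linarith
  -- growth of t
  have hstep : ∀ (a : ℤ) (k : ℕ), t a + δ * (k : ℝ) ≤ t (a + (k : ℤ)) := by
    intro a k
    induction k with
    | zero => simp
    | succ k ih =>
      have h1 := (ht (a + (k : ℤ))).1
      have e : a + ((k : ℤ) + 1) = (a + (k : ℤ)) + 1 := by ring
      push_cast
      rw [e]
      push_cast at ih
      linarith
  have htgrow : ∀ a b : ℤ, a ≤ b → t a + δ * ((b : ℝ) - (a : ℝ)) ≤ t b := by
    intro a b hab
    obtain ⟨k, rfl⟩ : ∃ k : ℕ, b = a + (k : ℤ) := ⟨(b - a).toNat, by omega⟩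
    have := hstep a k
    push_cast
    linarith
  have htmono : ∀ a b : ℤ, a ≤ b → t a ≤ t b := by
    intro a b hab
    have h1 := htgrow a b hab
    have h2 : (0:ℝ) ≤ δ * ((b:ℝ) - a) := by
      have : (a:ℝ) ≤ b := by exact_mod_cast hab
      nlinarith
    linarith
  -- slow variation of Q, two forms
  have hQup : ∀ s u : ℝ, 0 ≤ u → u ≤ ρ → Q (s + u) ≤ Real.exp c * Q s := by
    intro s u h0 h1
    have h2 := (hQslow s u h0 h1).2
    have hq := hQpos s
    rw [div_le_iff₀ hq] at h2
    linarith [mul_comm (Real.exp c) (Q s)]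
  have hQdown : ∀ s u : ℝ, 0 ≤ u → u ≤ ρ → Q s ≤ Real.exp c * Q (s + u) := by
    intro s u h0 h1
    have h2 := (hQslow s u h0 h1).1
    have hq := hQpos s
    rw [le_div_iff₀ hq] at h2
    have e1 : Real.exp c * Real.exp (-c) = 1 := by rw [← Real.exp_add]; simp
    nlinarith [mul_le_mul_of_nonneg_left h2 (Real.exp_pos c).le]
  -- the two sets
  set A : Set ℝ := {y : ℝ | ∃ m : ℤ, n ≤ m ∧ y = Real.exp (ε * (t m - t n)) * Q (t m)} with hA
  set B : Set ℝ := {y : ℝ | ∃ s : ℝ, 0 ≤ s ∧ y = Real.exp (ε * s) * Q (τ + s)} with hB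
  have hAne : A.Nonempty := ⟨_, n, le_refl n, rfl⟩
  have hBne : B.Nonempty := ⟨_, 0, le_refl 0, rfl⟩
  have hAbdd : BddBelow A := by
    refine ⟨0, ?_⟩
    rintro y ⟨m, _, rfl⟩
    exact mul_nonneg (Real.exp_pos _).le (hQpos _).le
  have hBbdd : BddBelow B := by
    refine ⟨0, ?_⟩
    rintro y ⟨s, _, rfl⟩
    exact mul_nonneg (Real.exp_pos _).le (hQpos _).le
  -- existence of a greatest m with t m ≤ x, for x ≥ t n
  have hgreatest : ∀ x : ℝ, t n ≤ x → ∃ m : ℤ, n ≤ m ∧ t m ≤ x ∧ x < t (m + 1) := by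
    intro x hx
    have Hbdd : ∃ b : ℤ, ∀ z : ℤ, (n ≤ z ∧ t z ≤ x) → z ≤ b := by
      refine ⟨n + ⌈(x - t n) / δ⌉, ?_⟩
      rintro z ⟨hz, hzx⟩
      have h1 := htgrow n z hz
      have h2 : ((z : ℝ) - n) ≤ (x - t n) / δ := by
        rw [le_div_iff₀ hδ]
        nlinarith
      have h3 : ((z : ℝ) - n) ≤ (⌈(x - t n) / δ⌉ : ℝ) := le_trans h2 (Int.le_ceil _)
      have h4 : (z : ℝ) ≤ (n : ℝ) + (⌈(x - t n) / δ⌉ : ℝ) := by linarith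
      exact_mod_cast h4
    obtain ⟨m, ⟨hm1, hm2⟩, hmax⟩ := Int.exists_greatest_of_bdd Hbdd ⟨n, le_refl n, hx⟩
    refine ⟨m, hm1, hm2, ?_⟩
    by_contra hcon
    push_neg at hcon
    exact absurd (hmax (m + 1) ⟨by omega, hcon⟩) (by omega)
  constructor
  · -- lower bound: exp(-h) * qs τ ≤ ps n ; show exp(-h) * sInf B ≤ sInf A
    rw [hqs, hps]
    have key : Real.exp (-h) * sInf B ≤ sInf A := by
      apply le_csInf hAne
      rintro a ⟨m, hm, rfl⟩
      apply flipexp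
      by_cases hcase : τ ≤ t m
      · have hbmem : Real.exp (ε * (t m - τ)) * Q (τ + (t m - τ)) ∈ B :=
          ⟨t m - τ, by linarith, rfl⟩
        have e1 : τ + (t m - τ) = t m := by ring
        rw [e1] at hbmem
        calc sInf B ≤ Real.exp (ε * (t m - τ)) * Q (t m) := csInf_le hBbdd hbmem
        _ ≤ Real.exp (ε * (t m - t n)) * Q (t m) := by
          apply mul_le_mul_of_nonneg_right _ (hQpos _).le
          apply Real.exp_le_exp.2
          nlinarith
        _ ≤ Real.exp h * (Real.exp (ε * (t m - t n)) * Q (t m)) := by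
          nlinarith [Real.one_le_exp hh0, mul_pos (Real.exp_pos (ε * (t m - t n))) (hQpos (t m))]
      · push_neg at hcase
        have hbmem : Real.exp (ε * 0) * Q (τ + 0) ∈ B := ⟨0, le_refl 0, rfl⟩
        have hu0 : 0 ≤ τ - t m := by linarith
        have huρ : τ - t m ≤ ρ := by
          have hτn1 : t (n+1) ≤ t (m+1) := htmono _ _ (by omega)
          have := (ht m).2
          linarith
        have hQτ : Q τ ≤ Real.exp c * Q (t m) := by
          have h5 := hQup (t m) (τ - t m) hu0 huρ
          have e1 : t m + (τ - t m) = τ := by ring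
          rwa [e1] at h5
        have hεnn : 0 ≤ ε * (t m - t n) := by
          have := htmono n m hm
          nlinarith
        calc sInf B ≤ Real.exp (ε * 0) * Q (τ + 0) := csInf_le hBbdd hbmem
        _ = Q τ := by simp
        _ ≤ Real.exp c * Q (t m) := hQτ
        _ ≤ Real.exp h * (Real.exp (ε * (t m - t n)) * Q (t m)) := by
          rw [← mul_assoc, ← Real.exp_add]
          apply mul_le_mul_of_nonneg_right _ (hQpos _).le
          apply Real.exp_le_exp.2
          nlinarith
    have := mul_le_mul_of_nonneg_left key hε.le
    calc Real.exp (-h) * (ε * sInf B) = ε * (Real.exp (-h) * sInf B) := by ring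
    _ ≤ ε * sInf A := this
  · -- upper bound: ps n ≤ exp h * qs τ
    rw [hqs, hps]
    have key : Real.exp (-h) * sInf A ≤ sInf B := by
      apply le_csInf hBne
      rintro b ⟨s, hs, rfl⟩
      apply flipexp
      obtain ⟨m, hm, hm1, hm2⟩ := hgreatest (τ + s) (by linarith)
      have hamem : Real.exp (ε * (t m - t n)) * Q (t m) ∈ A := ⟨m, hm, rfl⟩
      have hu0 : 0 ≤ τ + s - t m := by linarith
      have huρ : τ + s - t m ≤ ρ := by
        have := (ht m).2
        linarith
      have hQm : Q (t m) ≤ Real.exp c * Q (τ + s) := by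
        have h5 := hQdown (t m) (τ + s - t m) hu0 huρ
        have e1 : t m + (τ + s - t m) = τ + s := by ring
        rwa [e1] at h5
      have hτρ : τ - t n ≤ ρ := by
        have := (ht n).2
        linarith
      calc sInf A ≤ Real.exp (ε * (t m - t n)) * Q (t m) := csInf_le hAbdd hamem
      _ ≤ Real.exp (ε * (t m - t n)) * (Real.exp c * Q (τ + s)) := by
        apply mul_le_mul_of_nonneg_left hQm (Real.exp_pos _).le
      _ ≤ Real.exp h * (Real.exp (ε * s) * Q (τ + s)) := by
        rw [← mul_assoc, ← Real.exp_add, ← mul_assoc, ← Real.exp_add]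
        apply mul_le_mul_of_nonneg_right _ (hQpos _).le
        apply Real.exp_le_exp.2
        nlinarith
    have key2 : sInf A ≤ Real.exp h * sInf B := by
      have := mul_le_mul_of_nonneg_left key (Real.exp_pos h).le
      have e1 : Real.exp h * (Real.exp (-h) * sInf A) = sInf A := by
        rw [← mul_assoc, ← Real.exp_add]; simp
      linarith
    calc ε * sInf A ≤ ε * (Real.exp h * sInf B) := mul_le_mul_of_nonneg_left key2 hε.le
    _ = Real.exp h * (ε * sInf B) := by ring
end

section
/- Let ε > 0, let Q : ℝ → (0, ∞), and let (t_n)_{n ∈ ℤ} be a strictly increasing sequence of real numbers. Define p^s(n) := ε · inf { e^{ε(t_m − t_n)} · Q(t_m) : m ∈ ℤ, m ≥ n } (infimum in ℝ; the set is bounded below by 0). Then for every n ∈ ℤ one has the greedy recursion p^s(n) = min { e^{ε(t_{n+1} − t_n)} · p^s(n+1), ε · Q(t_n) }. In particular, ε · Q(t_n) ≥ p^s(n) ≥ e^{−ε(t_n − t_m)} · p^s(m) for all n ≥ m. -/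
open Pointwise


/-- Greedy recursion for the ℤ-indexed hyperbolicity parameter `p^s`:
`p^s(n) = min { e^{ε(t_{n+1}−t_n)} p^s(n+1), ε Q(t_n) }`, and consequently
`ε Q(t_n) ≥ p^s(n) ≥ e^{−ε(t_n−t_m)} p^s(m)` for all `n ≥ m`. -/
theorem greedy_recursion_for_ps (ε : ℝ) (hε : 0 < ε) (Q : ℝ → ℝ) (hQ : ∀ s, 0 < Q s)
    (t : ℤ → ℝ) (ht : StrictMono t)
    (ps : ℤ → ℝ)
    (hps : ∀ n : ℤ, ps n =
      ε * sInf {y : ℝ | ∃ m : ℤ, n ≤ m ∧ y = Real.exp (ε * (t m - t n)) * Q (t m)}) :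
    (∀ n : ℤ, ps n = min (Real.exp (ε * (t (n + 1) - t n)) * ps (n + 1)) (ε * Q (t n))) ∧
    (∀ m n : ℤ, m ≤ n →
      ps n ≤ ε * Q (t n) ∧ Real.exp (-(ε * (t n - t m))) * ps m ≤ ps n) := by
  set S : ℤ → Set ℝ := fun n => {y : ℝ | ∃ m : ℤ, n ≤ m ∧ y = Real.exp (ε * (t m - t n)) * Q (t m)} with hS
  have hne : ∀ n, (S n).Nonempty := fun n => ⟨_, n, le_refl n, rfl⟩
  have hbdd : ∀ n, BddBelow (S n) := by
    intro n
    refine ⟨0, fun y hy => ?_⟩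
    obtain ⟨m, hm, rfl⟩ := hy
    have := (hQ (t m)).le
    positivity
  have key : ∀ n : ℤ, S n = insert (Q (t n)) ((Real.exp (ε * (t (n+1) - t n))) • S (n+1)) := by
    intro n
    ext y
    simp only [hS, Set.mem_insert_iff, Set.mem_smul_set, Set.mem_setOf_eq, smul_eq_mul]
    constructor
    · rintro ⟨m, hm, rfl⟩
      rcases eq_or_lt_of_le hm with h | h
      · left; simp [← h]
      · right
        refine ⟨Real.exp (ε * (t m - t (n+1))) * Q (t m), ⟨m, by omega, rfl⟩, ?_⟩
        rw [← mul_assoc, ← Real.exp_add]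
        try ring_nf
    · rintro (h | ⟨z, ⟨m, hm, rfl⟩, rfl⟩)
      · exact ⟨n, le_refl n, by simp [h]⟩
      · refine ⟨m, by omega, ?_⟩
        rw [← mul_assoc, ← Real.exp_add]
        try ring_nf
  have hInf : ∀ n : ℤ, sInf (S n) = min (Q (t n))
      (Real.exp (ε * (t (n+1) - t n)) * sInf (S (n+1))) := by
    intro n
    rw [key n, csInf_insert ((hbdd (n+1)).smul_of_nonneg (Real.exp_nonneg _))
      ((hne (n+1)).smul_set), Real.sInf_smul_of_nonneg (Real.exp_nonneg _)]
    rfl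
  have hrec : ∀ n : ℤ, ps n = min (Real.exp (ε * (t (n + 1) - t n)) * ps (n + 1)) (ε * Q (t n)) := by
    intro n
    rw [hps n]
    show ε * sInf (S n) = _
    rw [hInf n, min_comm, mul_min_of_nonneg _ _ hε.le, hps (n+1)]
    show min (ε * (Real.exp (ε * (t (n+1) - t n)) * sInf (S (n+1)))) (ε * Q (t n)) =
      min (Real.exp (ε * (t (n + 1) - t n)) * (ε * sInf (S (n+1)))) (ε * Q (t n))
    rw [← mul_assoc, ← mul_assoc, mul_comm ε]
  refine ⟨hrec, fun m n hmn => ⟨?_, ?_⟩⟩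
  · rw [hrec n]; exact min_le_right _ _
  · rw [Real.exp_neg, inv_mul_le_iff₀ (Real.exp_pos _)]
    have hsub : ∀ y ∈ S n, Real.exp (ε * (t n - t m)) * y ∈ S m := by
      rintro y ⟨k, hk, rfl⟩
      refine ⟨k, by omega, ?_⟩
      rw [← mul_assoc, ← Real.exp_add]
      try ring_nf
    have h1 : sInf (S m) ≤ Real.exp (ε * (t n - t m)) * sInf (S n) := by
      rw [← smul_eq_mul, ← Real.sInf_smul_of_nonneg (Real.exp_nonneg _)]
      refine csInf_le_csInf (hbdd m) ((hne n).smul_set) ?_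
      rintro y ⟨z, hz, rfl⟩
      exact hsub z hz
    calc ps m = ε * sInf (S m) := hps m
      _ ≤ ε * (Real.exp (ε * (t n - t m)) * sInf (S n)) := by
          exact mul_le_mul_of_nonneg_left h1 hε.le
      _ = Real.exp (ε * (t n - t m)) * ps n := by rw [hps n]; ring
end

section
/- Let ε > 0 and 0 < δ ≤ ρ. Let Q : ℝ → (0, ∞) and let (t_n)_{n ∈ ℤ} be a sequence of real numbers with δ ≤ t_{n+1} − t_n ≤ ρ for all n ∈ ℤ. Define p^s(n) := ε · inf { e^{ε(t_m − t_n)} · Q(t_m) : m ∈ ℤ, m ≥ n } (infimum in ℝ; the set is bounded below by 0) and q(τ) := ε · inf { e^{ε|t|} · Q(τ + t) : t ∈ ℝ }. If limsup_{τ → +∞} q(τ) > 0, then p^s(n) = ε · Q(t_n) for infinitely many n > 0. -/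
/-- Maximality: if the recurrence parameter `q` has positive limsup at `+∞`
(in the sense that some `c > 0` is exceeded at arbitrarily large times), then the
ℤ-indexed parameter `p^s(n)` attains its maximal allowed value `ε Q(t_n)` for
infinitely many `n > 0`. -/
theorem maximality_of_ps (ε ρ δ : ℝ) (hε : 0 < ε) (hδ : 0 < δ) (hδρ : δ ≤ ρ)
    (Q : ℝ → ℝ) (hQ : ∀ s, 0 < Q s)
    (t : ℤ → ℝ) (ht : ∀ n : ℤ, δ ≤ t (n + 1) - t n ∧ t (n + 1) - t n ≤ ρ)
    (ps : ℤ → ℝ)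
    (hps : ∀ n : ℤ, ps n =
      ε * sInf {y : ℝ | ∃ m : ℤ, n ≤ m ∧ y = Real.exp (ε * (t m - t n)) * Q (t m)})
    (q : ℝ → ℝ)
    (hq : ∀ τ : ℝ, q τ = ε * sInf {y : ℝ | ∃ s : ℝ, y = Real.exp (ε * |s|) * Q (τ + s)})
    (hlimsup : ∃ c : ℝ, 0 < c ∧ ∀ T : ℝ, ∃ τ : ℝ, T ≤ τ ∧ c ≤ q τ) :
    ∀ N : ℤ, ∃ n : ℤ, N ≤ n ∧ 0 < n ∧ ps n = ε * Q (t n) := by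
  intro N
  by_contra hcon
  push_neg at hcon
  -- monotonicity of t
  have hmonoN : ∀ (n : ℤ) (k : ℕ), δ * k ≤ t (n + k) - t n := by
    intro n k
    induction k with
    | zero => simp
    | succ k ih =>
      have h1 := (ht (n + k)).1
      have hc : n + ((k : ℤ) + 1) = (n + k) + 1 := by ring
      push_cast [hc]
      push_cast at ih
      nlinarith
  have hmono : ∀ (n m : ℤ), n ≤ m → δ * ((m : ℝ) - (n : ℝ)) ≤ t m - t n := by
    intro n m hnm
    have hk : n + ((m - n).toNat : ℤ) = m := by omega
    have := hmonoN n (m - n).toNat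
    rw [hk] at this
    have hz : ((m - n).toNat : ℤ) = m - n := Int.toNat_of_nonneg (by omega)
    have hc : (((m - n).toNat : ℕ) : ℝ) = (m : ℝ) - (n : ℝ) := by
      exact_mod_cast congrArg (Int.cast : ℤ → ℝ) hz
    rw [hc] at this
    exact this
  set n₀ : ℤ := max N 1 with hn₀
  have hn₀N : N ≤ n₀ := le_max_left _ _
  have hn₀pos : (0 : ℤ) < n₀ := lt_of_lt_of_le one_pos (le_max_right _ _)
  -- for every n ≥ n₀ there is a strictly later m that beats Q(t n)
  have hlt : ∀ n : ℤ, n₀ ≤ n →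
      ∃ m : ℤ, n < m ∧ Real.exp (ε * (t m - t n)) * Q (t m) < Q (t n) := by
    intro n hn
    set S : Set ℝ := {y : ℝ | ∃ m : ℤ, n ≤ m ∧ y = Real.exp (ε * (t m - t n)) * Q (t m)}
      with hS
    have hmem : Q (t n) ∈ S := ⟨n, le_refl n, by simp⟩
    have hne : S.Nonempty := ⟨_, hmem⟩
    have hbdd : BddBelow S := by
      refine ⟨0, fun y hy => ?_⟩
      obtain ⟨m, _, rfl⟩ := hy
      exact mul_nonneg (Real.exp_pos _).le (hQ _).le
    have hle : sInf S ≤ Q (t n) := csInf_le hbdd hmem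
    have hne' : sInf S ≠ Q (t n) := by
      intro h
      have := hcon n (le_trans hn₀N hn) (lt_of_lt_of_le hn₀pos hn)
      apply this
      rw [hps n, ← hS, h]
    have hlt' : sInf S < Q (t n) := lt_of_le_of_ne hle hne'
    obtain ⟨y, hyS, hy⟩ := exists_lt_of_csInf_lt hne hlt'
    obtain ⟨m, hnm, rfl⟩ := hyS
    refine ⟨m, ?_, hy⟩
    rcases lt_or_eq_of_le hnm with h | h
    · exact h
    · exfalso; subst h; simp at hy
  -- chain construction
  have hchain : ∀ k : ℕ, ∃ n : ℤ, n₀ ≤ n ∧ δ * k ≤ t n - t n₀ ∧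
      Q (t n) * Real.exp (ε * (t n - t n₀)) ≤ Q (t n₀) := by
    intro k
    induction k with
    | zero => exact ⟨n₀, le_refl _, by simp, by simp⟩
    | succ k ih =>
      obtain ⟨n, hn1, hn2, hn3⟩ := ih
      obtain ⟨m, hnm, hm⟩ := hlt n hn1
      have hstep : δ ≤ t m - t n := by
        have h0 := hmono n m (le_of_lt hnm)
        have h1 : ((n : ℝ) + 1) ≤ (m : ℝ) := by exact_mod_cast Int.add_one_le_iff.mpr hnm
        nlinarith
      refine ⟨m, le_trans hn1 (le_of_lt hnm), ?_, ?_⟩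
      · push_cast
        linarith
      · have hE : Real.exp (ε * (t m - t n₀)) =
            Real.exp (ε * (t m - t n)) * Real.exp (ε * (t n - t n₀)) := by
          rw [← Real.exp_add]; ring_nf
        rw [hE]
        have hQm := hQ (t m)
        have hQn := hQ (t n)
        have he1 : (0:ℝ) < Real.exp (ε * (t n - t n₀)) := Real.exp_pos _
        nlinarith
  obtain ⟨c, hc, hcq⟩ := hlimsup
  -- choose T large
  set T : ℝ := t n₀ + Real.log (ε * Q (t n₀) / c) / ε + 1 with hT
  obtain ⟨τ, hτT, hτq⟩ := hcq (max T (t n₀))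
  have hτT' : T ≤ τ := le_trans (le_max_left _ _) hτT
  have hτn₀ : t n₀ ≤ τ := le_trans (le_max_right _ _) hτT
  -- pick k with δ k ≥ τ - t n₀
  obtain ⟨k, hk⟩ := exists_nat_ge ((τ - t n₀) / δ)
  obtain ⟨n, hn1, hn2, hn3⟩ := hchain k
  have htn : τ ≤ t n := by
    have : τ - t n₀ ≤ δ * k := by
      rw [div_le_iff₀ hδ] at hk; linarith [hk]
    linarith
  -- q τ ≤ ε * exp(ε (t n - τ)) * Q (t n)
  have hqle : q τ ≤ ε * (Real.exp (ε * (t n - τ)) * Q (t n)) := by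
    rw [hq τ]
    have hbdd : BddBelow {y : ℝ | ∃ s : ℝ, y = Real.exp (ε * |s|) * Q (τ + s)} := by
      refine ⟨0, fun y hy => ?_⟩
      obtain ⟨s, rfl⟩ := hy
      exact mul_nonneg (Real.exp_pos _).le (hQ _).le
    have hmem : Real.exp (ε * (t n - τ)) * Q (t n) ∈
        {y : ℝ | ∃ s : ℝ, y = Real.exp (ε * |s|) * Q (τ + s)} := by
      refine ⟨t n - τ, ?_⟩
      rw [abs_of_nonneg (by linarith)]
      ring_nf
    have := csInf_le hbdd hmem
    exact mul_le_mul_of_nonneg_left this (le_of_lt hε)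
  -- combine
  have hcle : c ≤ ε * (Real.exp (ε * (t n - τ)) * Q (t n)) := le_trans hτq hqle
  have hkey : c * Real.exp (ε * (τ - t n₀)) ≤ ε * Q (t n₀) := by
    have hE : Real.exp (ε * (t n - τ)) * Real.exp (ε * (τ - t n₀)) =
        Real.exp (ε * (t n - t n₀)) := by
      rw [← Real.exp_add]; ring_nf
    have he2 : (0:ℝ) < Real.exp (ε * (τ - t n₀)) := Real.exp_pos _
    calc c * Real.exp (ε * (τ - t n₀))
        ≤ ε * (Real.exp (ε * (t n - τ)) * Q (t n)) * Real.exp (ε * (τ - t n₀)) :=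
          mul_le_mul_of_nonneg_right hcle (le_of_lt he2)
      _ = ε * (Q (t n) * Real.exp (ε * (t n - t n₀))) := by rw [← hE]; ring
      _ ≤ ε * Q (t n₀) := mul_le_mul_of_nonneg_left hn3 (le_of_lt hε)
  -- but exp(ε (τ - t n₀)) > ε Q(t n₀) / c
  have hbig : ε * Q (t n₀) / c < Real.exp (ε * (τ - t n₀)) := by
    have hpos : (0:ℝ) < ε * Q (t n₀) / c := by
      have := hQ (t n₀); positivity
    have h1 : Real.log (ε * Q (t n₀) / c) < ε * (τ - t n₀) := by
      have : Real.log (ε * Q (t n₀) / c) / ε + 1 ≤ τ - t n₀ := by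
        rw [hT] at hτT'; linarith
      have h2 : Real.log (ε * Q (t n₀) / c) ≤ ε * (τ - t n₀) - ε := by
        have := mul_le_mul_of_nonneg_left this (le_of_lt hε)
        rw [mul_add, mul_div_cancel₀ _ (ne_of_gt hε)] at this
        linarith
      linarith
    calc ε * Q (t n₀) / c = Real.exp (Real.log (ε * Q (t n₀) / c)) := by
          rw [Real.exp_log hpos]
      _ < Real.exp (ε * (τ - t n₀)) := Real.exp_lt_exp.mpr h1
  have : ε * Q (t n₀) < c * Real.exp (ε * (τ - t n₀)) := by
    rw [div_lt_iff₀ hc] at hbig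
    linarith [hbig]
  linarith
end

section
/- Let 0 < ε ≤ 1/2, 0 < ρ ≤ 1/4, 0 < T ≤ ρ, and Q_x, Q_y ∈ (0, 1]. Let p^s, p^u ∈ (0, ε·Q_x] and q^s, q^u ∈ (0, ε·Q_y] be positive reals satisfying: (a) e^{−ε p^s} · min { e^{εT} q^s, e^{−ε} ε Q_x } ≤ p^s ≤ min { e^{εT} q^s, ε Q_x }, and (b) e^{−ε q^u} · min { e^{εT} p^u, e^{−ε} ε Q_y } ≤ q^u ≤ min { e^{εT} p^u, ε Q_y }. Then e^{−2ε} ≤ min(p^s, p^u) / min(q^s, q^u) ≤ e^{2ε}. -/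
/-- Helper: one-sided comparison used twice by symmetry. -/
lemma gpo2_min_comparison_aux (ε T Qy ps pu qs qu : ℝ)
    (hε : 0 < ε) (hε' : ε ≤ 1 / 2) (hT : 0 < T) (hT' : T ≤ 1 / 4)
    (hQy : 0 < Qy) (hQy' : Qy ≤ 1)
    (hqs : 0 < qs) (hqs' : qs ≤ ε * Qy) (hqu : 0 < qu) (hqu' : qu ≤ ε * Qy)
    (hpu : 0 < pu)
    (ha2 : ps ≤ Real.exp (ε * T) * qs)
    (hb1 : Real.exp (-(ε * qu)) *
      min (Real.exp (ε * T) * pu) (Real.exp (-ε) * (ε * Qy)) ≤ qu) :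
    min ps pu ≤ Real.exp (2 * ε) * min qs qu := by
  have hqu1 : qu ≤ ε := hqu'.trans (by nlinarith)
  have hps_qs : ps ≤ Real.exp (2 * ε) * qs := by
    refine ha2.trans ?_
    have h1 : Real.exp (ε * T) ≤ Real.exp (2 * ε) :=
      Real.exp_le_exp.2 (by nlinarith)
    nlinarith [Real.exp_pos (ε * T)]
  have key : min ps pu ≤ Real.exp (2 * ε) * qu := by
    rcases le_or_gt (Real.exp (ε * T) * pu) (Real.exp (-ε) * (ε * Qy)) with h | h
    · -- min = e^{εT} pu
      rw [min_eq_left h, ← mul_assoc, ← Real.exp_add] at hb1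
      have hE : Real.exp (-(2 * ε)) ≤ Real.exp (-(ε * qu) + ε * T) :=
        Real.exp_le_exp.2 (by nlinarith)
      have h2 : Real.exp (-(2 * ε)) * pu ≤ qu :=
        le_trans (by nlinarith [Real.exp_pos (-(2 * ε)), Real.exp_pos (-(ε * qu) + ε * T)]) hb1
      have h3 : pu ≤ Real.exp (2 * ε) * qu := by
        have := mul_le_mul_of_nonneg_left h2 (Real.exp_pos (2 * ε)).le
        rw [← mul_assoc, ← Real.exp_add] at this
        simpa using this
      exact (min_le_right ps pu).trans h3
    · -- min = e^{-ε} ε Qy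
      rw [min_eq_right h.le, ← mul_assoc, ← Real.exp_add] at hb1
      -- hb1 : exp (-(ε*qu) + -ε) * (ε * Qy) ≤ qu
      have h4 : ps ≤ Real.exp (ε * T) * (ε * Qy) := by
        have := mul_le_mul_of_nonneg_left hqs' (Real.exp_pos (ε * T)).le
        exact ha2.trans this
      have h5 : ε * Qy ≤ Real.exp (ε * qu + ε) * qu := by
        have := mul_le_mul_of_nonneg_left hb1 (Real.exp_pos (ε * qu + ε)).le
        rw [← mul_assoc, ← Real.exp_add] at this
        have e0 : ε * qu + ε + (-(ε * qu) + -ε) = 0 := by ring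
        rw [e0, Real.exp_zero, one_mul] at this
        exact this
      have h6 : ps ≤ Real.exp (ε * T) * (Real.exp (ε * qu + ε) * qu) := by
        refine h4.trans ?_
        exact mul_le_mul_of_nonneg_left h5 (Real.exp_pos (ε * T)).le
      rw [← mul_assoc, ← Real.exp_add] at h6
      have hE : Real.exp (ε * T + (ε * qu + ε)) ≤ Real.exp (2 * ε) :=
        Real.exp_le_exp.2 (by nlinarith)
      have h7 : ps ≤ Real.exp (2 * ε) * qu :=
        h6.trans (by nlinarith)
      exact (min_le_left ps pu).trans h7
  have := le_min ((min_le_left ps pu).trans hps_qs) key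
  rwa [← mul_min_of_nonneg _ _ (Real.exp_pos (2 * ε)).le] at this

/-- Comparability of the sizes of consecutive ε-double charts (Lemma 4.2 of the paper):
if the parameters `(p^s, p^u)` and `(q^s, q^u)` satisfy the two (GPO2) inequalities with
transition time `T ∈ (0, ρ]`, then `min(p^s,p^u)/min(q^s,q^u) = e^{±2ε}`. -/
theorem gpo2_min_comparison (ε ρ T Qx Qy ps pu qs qu : ℝ)
    (hε : 0 < ε) (hε' : ε ≤ 1 / 2) (hρ : 0 < ρ) (hρ' : ρ ≤ 1 / 4)
    (hT : 0 < T) (hTρ : T ≤ ρ)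
    (hQx : 0 < Qx) (hQx' : Qx ≤ 1) (hQy : 0 < Qy) (hQy' : Qy ≤ 1)
    (hps : 0 < ps) (hps' : ps ≤ ε * Qx) (hpu : 0 < pu) (hpu' : pu ≤ ε * Qx)
    (hqs : 0 < qs) (hqs' : qs ≤ ε * Qy) (hqu : 0 < qu) (hqu' : qu ≤ ε * Qy)
    (ha1 : Real.exp (-(ε * ps)) *
      min (Real.exp (ε * T) * qs) (Real.exp (-ε) * (ε * Qx)) ≤ ps)
    (ha2 : ps ≤ min (Real.exp (ε * T) * qs) (ε * Qx))
    (hb1 : Real.exp (-(ε * qu)) *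
      min (Real.exp (ε * T) * pu) (Real.exp (-ε) * (ε * Qy)) ≤ qu)
    (hb2 : qu ≤ min (Real.exp (ε * T) * pu) (ε * Qy)) :
    Real.exp (-(2 * ε)) ≤ min ps pu / min qs qu ∧
      min ps pu / min qs qu ≤ Real.exp (2 * ε) := by
  have hT' : T ≤ 1 / 4 := hTρ.trans hρ'
  have hminq : 0 < min qs qu := lt_min hqs hqu
  have hub : min ps pu ≤ Real.exp (2 * ε) * min qs qu :=
    gpo2_min_comparison_aux ε T Qy ps pu qs qu hε hε' hT hT' hQy hQy'
      hqs hqs' hqu hqu' hpu (ha2.trans (min_le_left _ _)) hb1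
  have hlb : min qu qs ≤ Real.exp (2 * ε) * min pu ps :=
    gpo2_min_comparison_aux ε T Qx qu qs pu ps hε hε' hT hT' hQx hQx'
      hpu hpu' hps hps' hqs (hb2.trans (min_le_left _ _)) ha1
  rw [min_comm qu qs, min_comm pu ps] at hlb
  constructor
  · rw [le_div_iff₀ hminq]
    have h := mul_le_mul_of_nonneg_left hlb (Real.exp_pos (-(2 * ε))).le
    rw [← mul_assoc, ← Real.exp_add] at h
    simpa using h
  · rw [div_le_iff₀ hminq]
    exact hub
end

section
/- Let χ ∈ (0, 1) and ρ > 0. Let f : [0, ∞) → [0, ∞) be measurable with f(0) > 0, with f(s + u) ≥ e^{−ρ − u} f(s) for all s, u ≥ 0, and with I := ∫₀^∞ e^{2χs} f(s)² ds < ∞. For t ≥ 0 set g(t) := ∫₀^∞ e^{2χs} f(s + t)² ds. Then: (i) g(t) < e^{−2χt} · I for every t > 0; (ii) g(t) ≥ e^{−2χt} · (1 − e^{2ρ}(1 − e^{−2(1−χ)t})) · I for every t ≥ 0; (iii) if moreover ρ ≤ 1/8, then g(t) ≥ e^{−8ρ} · I for all 0 ≤ t ≤ 2ρ. -/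
open MeasureTheory

open Set in
/-- The substitution map used in the proof of the lower bound. -/
noncomputable def lyapPhi (a t s : ℝ) : ℝ :=
  (Real.log (1 - Real.exp (-(a * t))) -
    Real.log (Real.exp (-(a * s)) - Real.exp (-(a * t)))) / a

lemma lyapW_pos {a t s : ℝ} (ha : 0 < a) (hst : s < t) :
    0 < Real.exp (-(a * s)) - Real.exp (-(a * t)) := by
  have : Real.exp (-(a * t)) < Real.exp (-(a * s)) :=
    Real.exp_lt_exp.mpr (by nlinarith)
  linarith

lemma lyapC_pos {a t : ℝ} (ha : 0 < a) (ht : 0 < t) :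
    0 < 1 - Real.exp (-(a * t)) := by
  have : Real.exp (-(a * t)) < 1 := Real.exp_lt_one_iff.mpr (by nlinarith)
  linarith

lemma lyapPhi_exp {a t s : ℝ} (ha : 0 < a) (ht : 0 < t) (hst : s < t) :
    Real.exp (-(a * lyapPhi a t s)) =
      (Real.exp (-(a * s)) - Real.exp (-(a * t))) / (1 - Real.exp (-(a * t))) := by
  have hw := lyapW_pos ha hst
  have hc := lyapC_pos ha ht
  have : -(a * lyapPhi a t s) =
      Real.log (Real.exp (-(a * s)) - Real.exp (-(a * t))) -
        Real.log (1 - Real.exp (-(a * t))) := by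
    unfold lyapPhi
    field_simp
    ring
  rw [this, Real.exp_sub, Real.exp_log hw, Real.exp_log hc]

lemma lyapPhi_ge {a t s : ℝ} (ha : 0 < a) (ht : 0 < t) (hs0 : 0 ≤ s) (hst : s < t) :
    s ≤ lyapPhi a t s := by
  have hw := lyapW_pos ha hst
  have hc := lyapC_pos ha ht
  have hs1 : Real.exp (-(a * s)) ≤ 1 := Real.exp_le_one_iff.mpr (by nlinarith)
  have htpos := Real.exp_pos (-(a * t))
  have h1 : Real.exp (-(a * lyapPhi a t s)) ≤ Real.exp (-(a * s)) := by
    rw [lyapPhi_exp ha ht hst, div_le_iff₀ hc]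
    nlinarith
  have := Real.exp_le_exp.mp h1
  nlinarith

lemma lyapPhi_hasDeriv {a t s : ℝ} (ha : 0 < a) (hst : s < t) :
    HasDerivAt (lyapPhi a t)
      (Real.exp (-(a * s)) / (Real.exp (-(a * s)) - Real.exp (-(a * t)))) s := by
  have hw := lyapW_pos ha hst
  have h1 : HasDerivAt (fun s : ℝ => -(a * s)) (-a) s := by
    exact ((hasDerivAt_id s).const_mul a).neg.congr_deriv (by ring)
  have h2 : HasDerivAt (fun s : ℝ => Real.exp (-(a * s)) - Real.exp (-(a * t)))
      (Real.exp (-(a * s)) * (-a)) s := (h1.exp).sub_const _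
  have h3 : HasDerivAt (fun s : ℝ => Real.log (Real.exp (-(a * s)) - Real.exp (-(a * t))))
      ((Real.exp (-(a * s)) * (-a)) / (Real.exp (-(a * s)) - Real.exp (-(a * t)))) s :=
    h2.log (ne_of_gt hw)
  have h4 := ((hasDerivAt_const s
      (Real.log (1 - Real.exp (-(a * t))))).sub h3).div_const a
  refine h4.congr_deriv ?_
  field_simp
  ring

lemma lyapPhi_strictMono {a t : ℝ} (ha : 0 < a) :
    StrictMonoOn (lyapPhi a t) (Set.Ioo 0 t) := by
  intro s1 h1 s2 h2 h12
  have hw1 := lyapW_pos ha h1.2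
  have hw2 := lyapW_pos ha h2.2
  have hlt : Real.exp (-(a * s2)) < Real.exp (-(a * s1)) :=
    Real.exp_lt_exp.mpr (by nlinarith)
  have : Real.log (Real.exp (-(a * s2)) - Real.exp (-(a * t))) <
      Real.log (Real.exp (-(a * s1)) - Real.exp (-(a * t))) :=
    Real.log_lt_log hw2 (by linarith)
  unfold lyapPhi
  exact (div_lt_div_iff_of_pos_right ha).mpr (by linarith)

set_option maxHeartbeats 2000000 in
/-- The bounds of Claim 1 in the Oseledets–Pesin reduction: for `f` with the lower growth
bound `f(s+u) ≥ e^{−ρ−u} f(s)` and finite weighted square-integral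
`I = ∫₀^∞ e^{2χs} f(s)² ds`, the shifted integrals `g(t) = ∫₀^∞ e^{2χs} f(s+t)² ds`
satisfy `g(t) < e^{−2χt} I` for `t > 0`,
`g(t) ≥ e^{−2χt}(1 − e^{2ρ}(1 − e^{−2(1−χ)t})) I` for `t ≥ 0`, and, if `ρ ≤ 1/8`,
`g(t) ≥ e^{−8ρ} I` for `0 ≤ t ≤ 2ρ`. -/
theorem lyapunov_norm_contraction_bounds (χ ρ : ℝ) (hχ0 : 0 < χ) (hχ1 : χ < 1) (hρ : 0 < ρ)
    (f : ℝ → ℝ) (hf : Measurable f) (hf0 : ∀ s : ℝ, 0 ≤ s → 0 ≤ f s) (hfpos : 0 < f 0)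
    (hgrowth : ∀ s u : ℝ, 0 ≤ s → 0 ≤ u → Real.exp (-ρ - u) * f s ≤ f (s + u))
    (hint : IntegrableOn (fun s => Real.exp (2 * χ * s) * f s ^ 2) (Set.Ioi 0))
    (I : ℝ) (hI : I = ∫ s in Set.Ioi (0 : ℝ), Real.exp (2 * χ * s) * f s ^ 2)
    (g : ℝ → ℝ)
    (hg : ∀ t : ℝ, g t = ∫ s in Set.Ioi (0 : ℝ), Real.exp (2 * χ * s) * f (s + t) ^ 2) :
    (∀ t : ℝ, 0 < t → g t < Real.exp (-(2 * χ * t)) * I) ∧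
    (∀ t : ℝ, 0 ≤ t →
      Real.exp (-(2 * χ * t)) *
          (1 - Real.exp (2 * ρ) * (1 - Real.exp (-(2 * (1 - χ) * t)))) * I ≤ g t) ∧
    (ρ ≤ 1 / 8 → ∀ t : ℝ, 0 ≤ t → t ≤ 2 * ρ → Real.exp (-(8 * ρ)) * I ≤ g t) := by
  classical
  open Set in
  set h : ℝ → ℝ := fun s => Real.exp (2 * χ * s) * f s ^ 2 with hh
  have h_nonneg : ∀ s, 0 ≤ h s := fun s => by positivity
  have hI_nonneg : 0 ≤ I := by
    rw [hI]; exact setIntegral_nonneg measurableSet_Ioi fun x _ => h_nonneg x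
  -- translation identity
  have htrans : ∀ t : ℝ, 0 ≤ t → g t = Real.exp (-(2 * χ * t)) * ∫ v in Set.Ioi t, h v := by
    intro t ht
    rw [hg t]
    have e1 : ∀ s : ℝ, Real.exp (2 * χ * s) * f (s + t) ^ 2
        = Real.exp (-(2 * χ * t)) * h (s + t) := by
      intro s
      rw [hh]
      simp only
      rw [← mul_assoc, ← Real.exp_add]
      ring_nf
    simp_rw [e1]
    rw [MeasureTheory.integral_const_mul]
    congr 1
    rw [← integral_indicator measurableSet_Ioi, ← integral_indicator measurableSet_Ioi]
    have e2 : ∀ s : ℝ, (Set.Ioi (0:ℝ)).indicator (fun s => h (s + t)) s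
        = ((Set.Ioi t).indicator h) (s + t) := by
      intro s
      by_cases hs : s ∈ Set.Ioi (0:ℝ)
      · rw [Set.indicator_of_mem hs, Set.indicator_of_mem (by simp only [Set.mem_Ioi] at hs ⊢; linarith)]
      · rw [Set.indicator_of_notMem hs, Set.indicator_of_notMem (by simp only [Set.mem_Ioi] at hs ⊢; intro hc; exact hs (by linarith))]
    simp_rw [e2]
    exact integral_add_right_eq_self ((Set.Ioi t).indicator h) t
  -- splitting
  have hIoc_int : ∀ t : ℝ, IntegrableOn h (Set.Ioc 0 t) := fun t =>
    hint.mono_set Set.Ioc_subset_Ioi_self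
  have hIoi_int : ∀ t : ℝ, 0 ≤ t → IntegrableOn h (Set.Ioi t) := fun t ht =>
    hint.mono_set (Set.Ioi_subset_Ioi ht)
  have hsplit : ∀ t : ℝ, 0 ≤ t →
      I = (∫ v in Set.Ioc 0 t, h v) + ∫ v in Set.Ioi t, h v := by
    intro t ht
    rw [hI, ← Set.Ioc_union_Ioi_eq_Ioi ht,
      MeasureTheory.setIntegral_union (Set.Ioc_disjoint_Ioi le_rfl) measurableSet_Ioi
        (hIoc_int t) (hIoi_int t ht)]
  -- positivity of the head
  have hpos : ∀ t : ℝ, 0 < t → 0 < ∫ v in Set.Ioc (0:ℝ) t, h v := by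
    intro t ht
    have hlow : ∀ v ∈ Set.Ioc (0:ℝ) t,
        Real.exp ((2 * χ - 2) * t - 2 * ρ) * f 0 ^ 2 ≤ h v := by
      intro v hv
      obtain ⟨hv0, hvt⟩ := hv
      have hfv := hgrowth 0 v le_rfl hv0.le
      rw [zero_add] at hfv
      have hnn : 0 ≤ Real.exp (-ρ - v) * f 0 := by positivity
      have h1 : (Real.exp (-ρ - v) * f 0) ^ 2 ≤ f v ^ 2 := by
        apply pow_le_pow_left₀ hnn hfv
      have h2 : Real.exp (2 * χ * v) * (Real.exp (-ρ - v) * f 0) ^ 2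
          = Real.exp ((2 * χ - 2) * v - 2 * ρ) * f 0 ^ 2 := by
        rw [mul_pow, pow_two (Real.exp (-ρ - v)), ← Real.exp_add, ← mul_assoc,
          ← Real.exp_add]
        congr 2
        ring
      calc Real.exp ((2 * χ - 2) * t - 2 * ρ) * f 0 ^ 2
          ≤ Real.exp ((2 * χ - 2) * v - 2 * ρ) * f 0 ^ 2 := by
            apply mul_le_mul_of_nonneg_right _ (by positivity)
            exact Real.exp_le_exp.mpr (by nlinarith)
        _ = Real.exp (2 * χ * v) * (Real.exp (-ρ - v) * f 0) ^ 2 := h2.symm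
        _ ≤ Real.exp (2 * χ * v) * f v ^ 2 :=
            mul_le_mul_of_nonneg_left h1 (Real.exp_pos _).le
    have hconst := setIntegral_ge_of_const_le_real measurableSet_Ioc
      (by exact measure_Ioc_lt_top.ne) hlow (hIoc_int t)
    rw [Real.volume_real_Ioc_of_le ht.le] at hconst
    calc (0:ℝ) < Real.exp ((2 * χ - 2) * t - 2 * ρ) * f 0 ^ 2 * (t - 0) := by
          have he := Real.exp_pos ((2 * χ - 2) * t - 2 * ρ)
          have hf2 : 0 < f 0 ^ 2 := by positivity
          exact mul_pos (mul_pos he hf2) (by linarith)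
      _ ≤ ∫ v in Set.Ioc (0:ℝ) t, h v := hconst
  -- the key upper bound on the head
  have hmain : ∀ t : ℝ, 0 < t → (∫ v in Set.Ioc (0:ℝ) t, h v)
      ≤ Real.exp (2 * ρ) * (1 - Real.exp (-(2 * (1 - χ) * t))) * I := by
    intro t ht
    set a : ℝ := 2 * (1 - χ) with ha_def
    have ha : 0 < a := by rw [ha_def]; linarith
    have hc : 0 < 1 - Real.exp (-(a * t)) := lyapC_pos ha ht
    set c : ℝ := 1 - Real.exp (-(a * t)) with hc_def
    set φ : ℝ → ℝ := lyapPhi a t with hφ_def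
    set φ' : ℝ → ℝ := fun s =>
      Real.exp (-(a * s)) / (Real.exp (-(a * s)) - Real.exp (-(a * t))) with hφ'_def
    have hderiv : ∀ s ∈ Set.Ioo (0:ℝ) t, HasDerivWithinAt φ (φ' s) (Set.Ioo 0 t) s :=
      fun s hs => (lyapPhi_hasDeriv ha hs.2).hasDerivWithinAt
    have hinj : Set.InjOn φ (Set.Ioo 0 t) := (lyapPhi_strictMono ha).injOn
    have himg : φ '' (Set.Ioo 0 t) ⊆ Set.Ioi 0 := by
      rintro y ⟨s, hs, rfl⟩
      exact lt_of_lt_of_le hs.1 (lyapPhi_ge ha ht hs.1.le hs.2)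
    have hIimg : IntegrableOn h (φ '' (Set.Ioo 0 t)) := hint.mono_set himg
    have key := integral_image_eq_integral_abs_deriv_smul measurableSet_Ioo hderiv hinj h
    have hIS : IntegrableOn (fun s => |φ' s| • h (φ s)) (Set.Ioo 0 t) :=
      (integrableOn_image_iff_integrableOn_abs_deriv_smul measurableSet_Ioo
        hderiv hinj h).mp hIimg
    have hφ'pos : ∀ s ∈ Set.Ioo (0:ℝ) t, 0 < φ' s := by
      intro s hs
      exact div_pos (Real.exp_pos _) (lyapW_pos ha hs.2)
    have hptwise : ∀ s ∈ Set.Ioo (0:ℝ) t,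
        (Real.exp (-(2 * ρ)) / c) * h s ≤ |φ' s| • h (φ s) := by
      intro s hs
      have hw := lyapW_pos ha hs.2
      have hφs := lyapPhi_ge ha ht hs.1.le hs.2
      have hgr := hgrowth s (φ s - s) hs.1.le (by linarith)
      rw [add_sub_cancel] at hgr
      have hfs_nn : 0 ≤ f s := hf0 s hs.1.le
      have h1 : (Real.exp (-ρ - (φ s - s)) * f s) ^ 2 ≤ f (φ s) ^ 2 :=
        pow_le_pow_left₀ (by positivity) hgr 2
      have hkey : φ' s * Real.exp (-(a * φ s)) * Real.exp (a * s) = 1 / c := by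
        rw [hφ'_def]
        simp only
        rw [hφ_def, lyapPhi_exp ha ht hs.2]
        have he := Real.exp_pos (-(a * s))
        have : Real.exp (-(a * s)) * Real.exp (a * s) = 1 := by
          rw [← Real.exp_add]; simp
        field_simp
        rw [this, one_mul]
        exact div_self hc.ne'
      have hid : (Real.exp (-(2 * ρ)) / c) * (Real.exp (2 * χ * s) * f s ^ 2)
          = φ' s * (Real.exp (2 * χ * φ s) * ((Real.exp (-ρ - (φ s - s)) * f s) ^ 2)) := by
        have harg : 2 * χ * φ s + (-ρ - (φ s - s) + (-ρ - (φ s - s)))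
            = -(a * φ s) + (a * s + (-(2 * ρ) + 2 * χ * s)) := by
          rw [ha_def]; ring
        refine Eq.symm ?_
        calc φ' s * (Real.exp (2 * χ * φ s) * ((Real.exp (-ρ - (φ s - s)) * f s) ^ 2))
            = φ' s * Real.exp (2 * χ * φ s + (-ρ - (φ s - s) + (-ρ - (φ s - s)))) * f s ^ 2 := by
              rw [mul_pow, pow_two (Real.exp (-ρ - (φ s - s))), ← Real.exp_add,
                ← mul_assoc (Real.exp (2 * χ * φ s)), ← Real.exp_add]
              ring
          _ = φ' s * (Real.exp (-(a * φ s)) * (Real.exp (a * s)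
                * (Real.exp (-(2 * ρ)) * Real.exp (2 * χ * s)))) * f s ^ 2 := by
              rw [harg, Real.exp_add, Real.exp_add, Real.exp_add]
          _ = (φ' s * Real.exp (-(a * φ s)) * Real.exp (a * s))
                * (Real.exp (-(2 * ρ)) * Real.exp (2 * χ * s)) * f s ^ 2 := by ring
          _ = (1 / c) * (Real.exp (-(2 * ρ)) * Real.exp (2 * χ * s)) * f s ^ 2 := by
              rw [hkey]
          _ = (Real.exp (-(2 * ρ)) / c) * (Real.exp (2 * χ * s) * f s ^ 2) := by ring
      calc (Real.exp (-(2 * ρ)) / c) * h s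
          = φ' s * (Real.exp (2 * χ * φ s) * ((Real.exp (-ρ - (φ s - s)) * f s) ^ 2)) := hid
        _ ≤ φ' s * (Real.exp (2 * χ * φ s) * f (φ s) ^ 2) := by
            apply mul_le_mul_of_nonneg_left _ (hφ'pos s hs).le
            exact mul_le_mul_of_nonneg_left h1 (Real.exp_pos _).le
        _ = |φ' s| • h (φ s) := by
            rw [abs_of_pos (hφ'pos s hs), smul_eq_mul]
    have chain : (Real.exp (-(2 * ρ)) / c) * (∫ v in Set.Ioo (0:ℝ) t, h v) ≤ I := by
      calc (Real.exp (-(2 * ρ)) / c) * (∫ v in Set.Ioo (0:ℝ) t, h v)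
          = ∫ v in Set.Ioo (0:ℝ) t, (Real.exp (-(2 * ρ)) / c) * h v :=
            (MeasureTheory.integral_const_mul _ _).symm
        _ ≤ ∫ s in Set.Ioo (0:ℝ) t, |φ' s| • h (φ s) :=
            setIntegral_mono_on
              ((hint.mono_set (Set.Ioo_subset_Ioi_self)).const_mul _) hIS
              measurableSet_Ioo hptwise
        _ = ∫ v in φ '' (Set.Ioo 0 t), h v := key.symm
        _ ≤ ∫ v in Set.Ioi (0:ℝ), h v :=
            setIntegral_mono_set hint
              (Filter.Eventually.of_forall fun x => h_nonneg x)
              (HasSubset.Subset.eventuallyLE himg)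
        _ = I := hI.symm
    have hIoo : (∫ v in Set.Ioc (0:ℝ) t, h v) = ∫ v in Set.Ioo (0:ℝ) t, h v :=
      integral_Ioc_eq_integral_Ioo
    rw [hIoo]
    have hee : Real.exp (-(2 * ρ)) * Real.exp (2 * ρ) = 1 := by
      rw [← Real.exp_add]; simp
    rw [div_mul_eq_mul_div, div_le_iff₀ hc] at chain
    have h2 := mul_le_mul_of_nonneg_left chain (Real.exp_pos (2 * ρ)).le
    have h3 : Real.exp (2 * ρ) * (Real.exp (-(2 * ρ)) * ∫ v in Set.Ioo (0:ℝ) t, h v)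
        = ∫ v in Set.Ioo (0:ℝ) t, h v := by
      rw [← mul_assoc, mul_comm (Real.exp (2 * ρ)) (Real.exp (-(2 * ρ))), hee, one_mul]
    linarith [h2, h3]
  refine ⟨?_, ?_, ?_⟩
  · intro t ht
    rw [htrans t ht.le, hsplit t ht.le]
    have hpos' := hpos t ht
    have hexp := Real.exp_pos (-(2 * χ * t))
    nlinarith [mul_pos hexp hpos']
  · intro t ht
    rw [htrans t ht]
    rcases eq_or_lt_of_le ht with rfl | ht'
    · simp only [mul_zero, neg_zero, Real.exp_zero, sub_self, sub_zero, one_mul]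
      exact le_of_eq hI
    · have hm := hmain t ht'
      have hs := hsplit t ht'.le
      have he := Real.exp_pos (-(2 * χ * t))
      have hEI : Real.exp (-(2 * χ * t)) * I
          = Real.exp (-(2 * χ * t)) * (∫ v in Set.Ioc (0:ℝ) t, h v)
            + Real.exp (-(2 * χ * t)) * ∫ v in Set.Ioi t, h v := by
        rw [hs]; ring
      nlinarith [mul_le_mul_of_nonneg_left hm he.le, hEI]
  · intro hρ8 t ht ht2
    have hii : Real.exp (-(2 * χ * t)) *
        (1 - Real.exp (2 * ρ) * (1 - Real.exp (-(2 * (1 - χ) * t)))) * I ≤ g t := by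
      -- reuse part (ii)
      rw [htrans t ht]
      rcases eq_or_lt_of_le ht with rfl | ht'
      · simp only [mul_zero, neg_zero, Real.exp_zero, sub_self, sub_zero, one_mul]
        exact le_of_eq hI
      · have hm := hmain t ht'
        have hs := hsplit t ht'.le
        have he := Real.exp_pos (-(2 * χ * t))
        have hEI : Real.exp (-(2 * χ * t)) * I
            = Real.exp (-(2 * χ * t)) * (∫ v in Set.Ioc (0:ℝ) t, h v)
              + Real.exp (-(2 * χ * t)) * ∫ v in Set.Ioi t, h v := by
          rw [hs]; ring
        nlinarith [mul_le_mul_of_nonneg_left hm he.le, hEI]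
    refine le_trans ?_ hii
    apply mul_le_mul_of_nonneg_right _ hI_nonneg
    -- coefficient inequality
    set u : ℝ := Real.exp (-(2 * ρ)) with hu_def
    have hu_pos : 0 < u := Real.exp_pos _
    have hu1 : u ≤ 1 := Real.exp_le_one_iff.mpr (by linarith)
    have hu34 : 3/4 ≤ u := by
      have := Real.add_one_le_exp (-(2 * ρ))
      rw [← hu_def] at this
      linarith
    have hE2u : Real.exp (2 * ρ) * u = 1 := by
      rw [hu_def, ← Real.exp_add]; simp
    have hE8 : Real.exp (-(8 * ρ)) = u ^ 4 := by
      rw [hu_def, ← Real.exp_nat_mul]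
      congr 1
      push_cast
      ring
    have hE13 : Real.exp (-(2 * χ * t)) * Real.exp (-(2 * (1 - χ) * t))
        = Real.exp (-(2 * t)) := by
      rw [← Real.exp_add]; congr 1; ring
    have hE4 : u ^ 2 ≤ Real.exp (-(2 * t)) := by
      have : Real.exp (-(4 * ρ)) ≤ Real.exp (-(2 * t)) :=
        Real.exp_le_exp.mpr (by linarith)
      refine le_trans (le_of_eq ?_) this
      rw [hu_def, ← Real.exp_nat_mul]
      congr 1
      push_cast
      ring
    have hE1le : Real.exp (-(2 * χ * t)) ≤ 1 :=
      Real.exp_le_one_iff.mpr (by nlinarith)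
    have hE1pos : 0 < Real.exp (-(2 * χ * t)) := Real.exp_pos _
    have hE2pos : 0 < Real.exp (2 * ρ) := Real.exp_pos _
    have step : Real.exp (-(2 * χ * t)) *
        (1 - Real.exp (2 * ρ) * (1 - Real.exp (-(2 * (1 - χ) * t))))
        = Real.exp (-(2 * χ * t)) * (1 - Real.exp (2 * ρ))
          + Real.exp (2 * ρ) * (Real.exp (-(2 * χ * t)) * Real.exp (-(2 * (1 - χ) * t))) := by
      ring
    rw [hE8, step, hE13]
    have hb1 : 1 - Real.exp (2 * ρ) ≤ Real.exp (-(2 * χ * t)) * (1 - Real.exp (2 * ρ)) := by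
      nlinarith
    have hb2 : Real.exp (2 * ρ) * u ^ 2 ≤ Real.exp (2 * ρ) * Real.exp (-(2 * t)) :=
      mul_le_mul_of_nonneg_left hE4 hE2pos.le
    have hfin : u ^ 4 ≤ 1 - Real.exp (2 * ρ) + Real.exp (2 * ρ) * u ^ 2 := by
      have hq : 0 ≤ (1 - u) * (u^4 + u^3 + u^2 - 1) := by
        have h2 : (9/16:ℝ) ≤ u^2 := by nlinarith
        have h3 : (27/64:ℝ) ≤ u^3 := by nlinarith [hu_pos.le]
        have h4 : (81/256:ℝ) ≤ u^4 := by nlinarith [hu_pos.le, h2]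
        nlinarith [h2, h3, h4]
      have hE2 : Real.exp (2 * ρ) = 1 / u := by
        field_simp at hE2u ⊢
        linarith [hE2u]
      rw [hE2]
      rw [div_mul_eq_mul_div, ← sub_nonneg]
      have expand : 1 - 1 / u + 1 * u ^ 2 / u - u ^ 4
          = (u + u^2 - 1 - u^5) / u := by
        field_simp
        ring
      rw [expand]
      apply div_nonneg _ hu_pos.le
      nlinarith
    linarith
end

section
/- Let χ > 0 and ρ > 0. Let f : [0, ∞) → [0, ∞) be measurable with f(0) > 0, f(s + u) ≥ e^{−ρ − u} f(s) for all s, u ≥ 0, and ∫₀^∞ e^{2χt} f(t)² dt < ∞. Then e^{χt} f(t) → 0 as t → +∞; consequently limsup_{t → +∞} (1/t) · log f(t) ≤ −χ. -/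
open MeasureTheory Filter

/-- If `f ≥ 0` satisfies the lower growth bound `f(s+u) ≥ e^{−ρ−u} f(s)`, `f(0) > 0`, and
`∫₀^∞ e^{2χt} f(t)² dt < ∞`, then `e^{χt} f(t) → 0` as `t → +∞`; consequently
`limsup_{t→+∞} (1/t) log f(t) ≤ −χ`. -/
theorem exp_decay_from_finite_lyapunov_integral (χ ρ : ℝ) (hχ : 0 < χ) (hρ : 0 < ρ)
    (f : ℝ → ℝ) (hf : Measurable f) (hf0 : ∀ s : ℝ, 0 ≤ s → 0 ≤ f s) (hfpos : 0 < f 0)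
    (hgrowth : ∀ s u : ℝ, 0 ≤ s → 0 ≤ u → Real.exp (-ρ - u) * f s ≤ f (s + u))
    (hint : IntegrableOn (fun t => Real.exp (2 * χ * t) * f t ^ 2) (Set.Ioi 0)) :
    Tendsto (fun t => Real.exp (χ * t) * f t) atTop (nhds 0) ∧
    limsup (fun t => Real.log (f t) / t) atTop ≤ -χ := by
  set g : ℝ → ℝ := fun t => Real.exp (2 * χ * t) * f t ^ 2 with hg
  -- positivity of f on [0,∞)
  have hfpos' : ∀ t : ℝ, 0 ≤ t → 0 < f t := by
    intro t ht
    have h := hgrowth 0 t le_rfl ht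
    rw [zero_add] at h
    exact lt_of_lt_of_le (by positivity) h
  -- interval integrability of g on [0, b] for b ≥ 0
  have hii : ∀ a b : ℝ, 0 ≤ a → a ≤ b → IntervalIntegrable g volume a b := by
    intro a b ha hab
    rw [intervalIntegrable_iff_integrableOn_Ioc_of_le hab]
    exact hint.mono_set (fun x hx => lt_of_lt_of_le (lt_of_le_of_lt ha hx.1) le_rfl)
  -- the moving window integral tends to 0
  have hI : Tendsto (fun t : ℝ => ∫ s in t..(t + 1), g s) atTop (nhds 0) := by
    have h1 : Tendsto (fun t : ℝ => ∫ s in (0:ℝ)..t, g s) atTop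
        (nhds (∫ s in Set.Ioi (0:ℝ), g s)) :=
      intervalIntegral_tendsto_integral_Ioi 0 hint tendsto_id
    have h2 : Tendsto (fun t : ℝ => ∫ s in (0:ℝ)..(t + 1), g s) atTop
        (nhds (∫ s in Set.Ioi (0:ℝ), g s)) :=
      intervalIntegral_tendsto_integral_Ioi 0 hint (tendsto_atTop_add_const_right _ 1 tendsto_id)
    have := h2.sub h1
    rw [sub_self] at this
    refine this.congr' ?_
    filter_upwards [eventually_ge_atTop (0:ℝ)] with t ht
    rw [intervalIntegral.integral_interval_sub_left (hii 0 (t + 1) le_rfl (by linarith))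
      (hii 0 t le_rfl ht)]
  -- pointwise bound: g t ≤ e^{2ρ+2} ∫_t^{t+1} g
  have hbound : ∀ t : ℝ, 0 ≤ t →
      g t ≤ Real.exp (2 * ρ + 2) * ∫ s in t..(t + 1), g s := by
    intro t ht
    have key : Real.exp (-(2 * ρ + 2)) * g t ≤ ∫ s in t..(t + 1), g s := by
      have hc : (Real.exp (-(2 * ρ + 2)) * g t) = ∫ s in t..(t + 1),
          Real.exp (-(2 * ρ + 2)) * g t := by
        rw [intervalIntegral.integral_const]
        rw [smul_eq_mul]; ring
      rw [hc]
      refine intervalIntegral.integral_mono_on (by linarith) (intervalIntegrable_const)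
        (hii t (t + 1) ht (by linarith)) ?_
      intro s hs
      obtain ⟨hs1, hs2⟩ := hs
      -- f s ≥ e^{-ρ-(s-t)} f t ≥ e^{-ρ-1} f t
      have hst : 0 ≤ s - t := by linarith
      have h1 : Real.exp (-ρ - (s - t)) * f t ≤ f s := by
        have := hgrowth t (s - t) ht hst
        rwa [add_sub_cancel] at this
      have h2 : Real.exp (-ρ - 1) * f t ≤ f s := by
        refine le_trans ?_ h1
        have : Real.exp (-ρ - 1) ≤ Real.exp (-ρ - (s - t)) :=
          Real.exp_le_exp.2 (by linarith)
        exact mul_le_mul_of_nonneg_right this (le_of_lt (hfpos' t ht))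
      have hfs : 0 ≤ f s := hf0 s (by linarith)
      have hft : 0 ≤ f t := (hfpos' t ht).le
      have hsq : (Real.exp (-ρ - 1) * f t) ^ 2 ≤ f s ^ 2 := by
        apply sq_le_sq' _ h2
        nlinarith [Real.exp_pos (-ρ - 1)]
      have hexp : Real.exp (2 * χ * t) ≤ Real.exp (2 * χ * s) :=
        Real.exp_le_exp.2 (by nlinarith)
      calc Real.exp (-(2 * ρ + 2)) * g t
          = Real.exp (2 * χ * t) * ((Real.exp (-ρ - 1) * f t) ^ 2) := by
            rw [hg]; rw [mul_pow, ← Real.exp_nat_mul]; push_cast; ring_nf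
        _ ≤ Real.exp (2 * χ * s) * f s ^ 2 := by
            apply mul_le_mul hexp hsq (by positivity) (Real.exp_pos _).le
        _ = g s := rfl
    calc g t = Real.exp (2 * ρ + 2) * (Real.exp (-(2 * ρ + 2)) * g t) := by
          have h0 : (2 * ρ + 2) + (-(2 * ρ + 2)) = 0 := by ring
          rw [← mul_assoc, ← Real.exp_add, h0, Real.exp_zero, one_mul]
      _ ≤ Real.exp (2 * ρ + 2) * ∫ s in t..(t + 1), g s :=
          mul_le_mul_of_nonneg_left key (Real.exp_pos _).le
  -- g → 0
  have hg0 : Tendsto g atTop (nhds 0) := by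
    have hupper : Tendsto (fun t : ℝ => Real.exp (2 * ρ + 2) * ∫ s in t..(t + 1), g s)
        atTop (nhds 0) := by
      have := hI.const_mul (Real.exp (2 * ρ + 2))
      rwa [mul_zero] at this
    refine tendsto_of_tendsto_of_tendsto_of_le_of_le' tendsto_const_nhds hupper ?_ ?_
    · filter_upwards [eventually_ge_atTop (0:ℝ)] with t ht
      have : 0 ≤ f t := hf0 t ht
      positivity
    · filter_upwards [eventually_ge_atTop (0:ℝ)] with t ht
      exact hbound t ht
  -- e^{χt} f t = sqrt (g t) for t ≥ 0
  have hmain : Tendsto (fun t => Real.exp (χ * t) * f t) atTop (nhds 0) := by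
    have hsqrt : Tendsto (fun t => Real.sqrt (g t)) atTop (nhds 0) := by
      have := (Real.continuous_sqrt.tendsto 0).comp hg0
      simpa [Function.comp_def] using this
    refine hsqrt.congr' ?_
    filter_upwards [eventually_ge_atTop (0:ℝ)] with t ht
    have hft : 0 ≤ f t := hf0 t ht
    have : g t = (Real.exp (χ * t) * f t) ^ 2 := by
      rw [hg, mul_pow, ← Real.exp_nat_mul]; push_cast; ring_nf
    rw [this, Real.sqrt_sq (by positivity)]
  refine ⟨hmain, ?_⟩
  -- limsup part
  have hev : ∀ᶠ t : ℝ in atTop, Real.log (f t) / t ≤ -χ := by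
    have h1 : ∀ᶠ t : ℝ in atTop, Real.exp (χ * t) * f t < 1 := by
      have := hmain.eventually (eventually_lt_nhds zero_lt_one)
      simpa using this
    filter_upwards [h1, eventually_ge_atTop (1:ℝ)] with t h1t ht1
    have ht0 : (0:ℝ) < t := by linarith
    have hft : 0 < f t := hfpos' t ht0.le
    have hflt : f t < Real.exp (-(χ * t)) := by
      have hE : (0:ℝ) < Real.exp (χ * t) := Real.exp_pos _
      rw [← mul_lt_mul_iff_right₀ hE, ← Real.exp_add]
      simpa using h1t
    have hlog : Real.log (f t) ≤ -(χ * t) := by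
      calc Real.log (f t) ≤ Real.log (Real.exp (-(χ * t))) := Real.log_le_log hft hflt.le
        _ = -(χ * t) := Real.log_exp _
    rw [div_le_iff₀ ht0]
    linarith [hlog]
  have hlow : ∀ᶠ t : ℝ in atTop, -|Real.log (f 0) - ρ| - 1 ≤ Real.log (f t) / t := by
    filter_upwards [eventually_ge_atTop (1:ℝ)] with t ht1
    have ht0 : (0:ℝ) < t := by linarith
    have hft : 0 < f t := hfpos' t ht0.le
    have h1 : Real.exp (-ρ - t) * f 0 ≤ f t := by
      have := hgrowth 0 t le_rfl ht0.le; rwa [zero_add] at this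
    have h2 : -ρ - t + Real.log (f 0) ≤ Real.log (f t) := by
      calc -ρ - t + Real.log (f 0) = Real.log (Real.exp (-ρ - t) * f 0) := by
            rw [Real.log_mul (Real.exp_ne_zero _) hfpos.ne', Real.log_exp]
        _ ≤ Real.log (f t) := Real.log_le_log (by positivity) h1
    rw [le_div_iff₀ ht0]
    nlinarith [neg_abs_le (Real.log (f 0) - ρ), abs_nonneg (Real.log (f 0) - ρ)]
  exact limsup_le_of_le (isCoboundedUnder_le_of_eventually_le atTop hlow) hev
end

section
/- Let ε > 0 and 0 < P < δ. Let (p_n)_{n ≥ 0} be a sequence in (0, P], (Q_n)_{n ≥ 0} a sequence in (0, ∞), and (T_n)_{n ≥ 0} a sequence of reals with T_n ≥ δ for all n, such that p_n ≥ e^{−ε p_n} · min { e^{ε T_n} p_{n+1}, e^{−ε} ε Q_n } for every n ≥ 0, and limsup_{n → ∞} p_n > 0. Then min { e^{ε T_n} p_{n+1}, e^{−ε} ε Q_n } = e^{−ε} ε Q_n for infinitely many n. -/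
open Filter

/-- Maximality in the chart (Lemma 6.6): if `p_n ∈ (0, P]`, `T_n ≥ δ > P`, the lower
(GPO2) inequality `p_n ≥ e^{−ε p_n} min(e^{ε T_n} p_{n+1}, e^{−ε} ε Q_n)` holds for all
`n`, and `limsup p_n > 0`, then the minimum is attained by `e^{−ε} ε Q_n` for infinitely
many `n`. -/
theorem gpo2_min_attained_infinitely_often (ε P δ : ℝ) (hε : 0 < ε) (hP : 0 < P)
    (hPδ : P < δ)
    (p Q T : ℕ → ℝ)
    (hp : ∀ n, 0 < p n) (hpP : ∀ n, p n ≤ P) (hQ : ∀ n, 0 < Q n) (hT : ∀ n, δ ≤ T n)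
    (hrec : ∀ n, Real.exp (-(ε * p n)) *
      min (Real.exp (ε * T n) * p (n + 1)) (Real.exp (-ε) * (ε * Q n)) ≤ p n)
    (hlimsup : 0 < limsup p atTop) :
    ∀ N : ℕ, ∃ n : ℕ, N ≤ n ∧
      min (Real.exp (ε * T n) * p (n + 1)) (Real.exp (-ε) * (ε * Q n))
        = Real.exp (-ε) * (ε * Q n) := by
  intro N
  by_contra h
  push_neg at h
  set c : ℝ := Real.exp (ε * (P - δ)) with hc
  have hc1 : c < 1 := by
    rw [hc, Real.exp_lt_one_iff]
    nlinarith
  have hc0 : 0 ≤ c := (Real.exp_pos _).le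
  have key : ∀ n, N ≤ n → p (n + 1) ≤ c * p n := by
    intro n hn
    have hmin := (min_choice (Real.exp (ε * T n) * p (n + 1))
      (Real.exp (-ε) * (ε * Q n))).resolve_right (h n hn)
    have hr := hrec n
    rw [hmin, ← mul_assoc, ← Real.exp_add] at hr
    have h1 : p (n + 1) ≤ Real.exp (-(-(ε * p n) + ε * T n)) * p n := by
      rw [Real.exp_neg, inv_mul_eq_div, le_div_iff₀ (Real.exp_pos _)]
      nlinarith [hr]
    have h2 : Real.exp (-(-(ε * p n) + ε * T n)) ≤ c := by
      rw [hc, Real.exp_le_exp]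
      nlinarith [hpP n, hT n]
    calc p (n + 1) ≤ Real.exp (-(-(ε * p n) + ε * T n)) * p n := h1
      _ ≤ c * p n := mul_le_mul_of_nonneg_right h2 (hp n).le
  have bound : ∀ k, p (N + k) ≤ c ^ k * p N := by
    intro k
    induction k with
    | zero => simp
    | succ k ih =>
        have := key (N + k) (Nat.le_add_right _ _)
        calc p (N + (k + 1)) = p ((N + k) + 1) := by ring_nf
          _ ≤ c * p (N + k) := this
          _ ≤ c * (c ^ k * p N) := by
              exact mul_le_mul_of_nonneg_left ih hc0
          _ = c ^ (k + 1) * p N := by ring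
  have htend0 : Tendsto (fun k => c ^ k * p N) atTop (nhds 0) := by
    have := (tendsto_pow_atTop_nhds_zero_of_lt_one hc0 hc1).mul_const (p N)
    simpa using this
  have htend : Tendsto (fun k => p (N + k)) atTop (nhds 0) :=
    squeeze_zero (fun k => (hp _).le) bound htend0
  have htendp : Tendsto p atTop (nhds 0) := by
    rw [← tendsto_add_atTop_iff_nat N]
    simpa [Nat.add_comm] using htend
  have : limsup p atTop = 0 := htendp.limsup_eq
  rw [this] at hlimsup
  exact lt_irrefl _ hlimsup
end
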